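/- arXiv:1602.03554 — 4 statements merged into one kernel-verified Lean document; each statement's English description precedes it below -/
import Mathlib

section
/- Let A be an associative conformal algebra over a field of characteristic 0. Define new products x_{[n]} y = x_{(n)} y − {y_{(n)} x}, where {y_{(n)} x} = Σ_{k ≥ 0} (−1)^{n+k} (1/k!) D^k (y_{(n+k)} x) (a finite sum by locality). Then the new products satisfy anti-commutativity: x_{[n]} y = −{y_{[n]} x}, where {y_{[n]} x} = Σ_{k ≥ 0} (−1)^{n+k} (1/k!) D^k (y_{[n+k]} x). -/
/-!  Basic definitions for (associative) conformal algebras, the free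
associative conformal algebra `C(B,N)`, normal words, the weight ordering,
normal `S`-words, compositions and Gröbner–Shirshov bases, following
Ni–Chen, "A new Composition-Diamond lemma for associative conformal algebras". -/

universe u v w

open scoped BigOperators

/-- A conformal algebra over a field `K`. -/
structure ConformalAlgebra (K : Type u) [Field K] (C : Type w)
    [AddCommGroup C] [Module K C] where
  mul : ℕ → C →ₗ[K] C →ₗ[K] C
  D : C →ₗ[K] C
  locality : ∀ a b : C, ∃ N : ℕ, ∀ n : ℕ, N ≤ n → mul n a b = 0
  leibniz : ∀ (n : ℕ) (a b : C), D (mul n a b) = mul n (D a) b + mul n a (D b)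
  D_mul : ∀ (n : ℕ) (a b : C), 0 < n → mul n (D a) b = -((n : K) • mul (n - 1) a b)
  D_mul_zero : ∀ a b : C, mul 0 (D a) b = 0

/-- An associative conformal algebra. -/
structure AssocConformalAlgebra (K : Type u) [Field K] (C : Type w)
    [AddCommGroup C] [Module K C] extends ConformalAlgebra K C where
  assoc : ∀ (n m : ℕ) (a b c : C),
    mul m (mul n a b) c =
      ∑ t ∈ Finset.range (n + 1),
        ((-1 : K) ^ t * (n.choose t : K)) • mul (n - t) a (mul (m + t) b c)

variable {K : Type u} [Field K] {C : Type w} [AddCommGroup C] [Module K C]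

/-- The conjugate sum `{y_(n) x} = Σ_{m≥0} (-1)^{n+m} (1/m!) D^m (f (n+m) y x)`;
a finite sum by locality. -/
noncomputable def conjOp (D : C →ₗ[K] C) (f : ℕ → C → C → C) (n : ℕ) (y x : C) : C :=
  ∑ᶠ m : ℕ, ((-1 : K) ^ (n + m) * ((m.factorial : K))⁻¹) • (D ^ m) (f (n + m) y x)

/-- The conformal commutator `x_[n] y = x_(n) y − {y_(n) x}`. -/
noncomputable def cBracket (A : AssocConformalAlgebra K C) (n : ℕ) (x y : C) : C :=
  A.mul n x y - conjOp A.D (fun m u v => A.mul m u v) n y x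

/-- An associative normal word `b₁_(n₁) ⋯ b_k_(n_k) D^i b_{k+1}`. -/
structure NormalWord (B : Type v) (N : ℕ) where
  body : List (B × Fin N)
  last : B
  exp : ℕ

namespace NormalWord

variable {B : Type v} {N : ℕ}

/-- `u D^i` : raise the final `D`-exponent by `i`. -/
def shiftD (u : NormalWord B N) (i : ℕ) : NormalWord B N := ⟨u.body, u.last, u.exp + i⟩

/-- Concatenation `a_(n) u` of a `D`-free word `a` with `u`. -/
def concat (u : NormalWord B N) (n : Fin N) (v : NormalWord B N) : NormalWord B N :=
  ⟨u.body ++ (u.last, n) :: v.body, v.last, v.exp⟩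

/-- `u^{\D} ♮ v` : drop the final `D`-exponent of `u` and concatenate with `v`,
all junction indices being `N − 1`. -/
def natMul (u v : NormalWord B N) (hN : 0 < N) : NormalWord B N :=
  ⟨u.body ++ (u.last, ⟨N - 1, Nat.sub_lt hN one_pos⟩) ::
      v.body.map (fun p => (p.1, (⟨N - 1, Nat.sub_lt hN one_pos⟩ : Fin N))),
    v.last, v.exp⟩

end NormalWord

/-- The strict weight ordering on associative normal words: compare lengths,
then the body lexicographically, then the last letter, then the `D`-exponent. -/
def wtLT {B : Type v} {N : ℕ} (r : B → B → Prop) (u v : NormalWord B N) : Prop :=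
  u.body.length < v.body.length ∨
    (u.body.length = v.body.length ∧
      (List.Lex (Prod.Lex r (· < ·)) u.body v.body ∨
        (u.body = v.body ∧ (r u.last v.last ∨ (u.last = v.last ∧ u.exp < v.exp)))))

def wtLE {B : Type v} {N : ℕ} (r : B → B → Prop) (u v : NormalWord B N) : Prop :=
  wtLT r u v ∨ u = v

/-- Words on the alphabet `D^ω(B) = {D^i b}`. -/
inductive CWord (B : Type v) : Type v
  | gen : B → ℕ → CWord B
  | mul : ℕ → CWord B → CWord B → CWord B

/-- Length of a word. -/
def CWord.length {B : Type v} : CWord B → ℕ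
  | .gen _ _ => 1
  | .mul _ u v => u.length + v.length

/-- The free associative conformal algebra `C(B,N)` generated by `B` with
uniformly bounded locality `N`, axiomatized by its universal property. -/
structure FreeAssocConformal (K : Type u) [Field K] (B : Type v) (N : ℕ)
    (C : Type w) [AddCommGroup C] [Module K C] where
  alg : AssocConformalAlgebra K C
  ι : B → C
  loc : ∀ (b b' : B) (n : ℕ), N ≤ n → alg.mul n (ι b) (ι b') = 0
  universal : ∀ (C' : Type w) [AddCommGroup C'] [Module K C']
      (A' : AssocConformalAlgebra K C') (ε : B → C'),
      (∀ (b b' : B) (n : ℕ), N ≤ n → A'.mul n (ε b) (ε b') = 0) →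
      ∃! φ : C →ₗ[K] C', (∀ b, φ (ι b) = ε b) ∧
        (∀ (n : ℕ) (x y : C), φ (alg.mul n x y) = A'.mul n (φ x) (φ y)) ∧
        (∀ x : C, φ (alg.D x) = A'.D (φ x))

variable {B : Type v} {N : ℕ}

/-- Evaluate a `D`-free prefix (a list of letters with indices) applied to `x`,
right-normed. -/
def evalAux (F : FreeAssocConformal K B N C) : List (B × Fin N) → C → C
  | [], x => x
  | p :: rest, x => F.alg.mul (p.2 : ℕ) (F.ι p.1) (evalAux F rest x)

/-- The element of `C(B,N)` given by a normal word (right-normed bracketing). -/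
def evalWord (F : FreeAssocConformal K B N C) (u : NormalWord B N) : C :=
  evalAux F u.body ((F.alg.D ^ u.exp) (F.ι u.last))

/-- Evaluate an arbitrary word on `D^ω(B)` in `C(B,N)`. -/
def evalCWord (F : FreeAssocConformal K B N C) : CWord B → C
  | .gen b i => (F.alg.D ^ i) (F.ι b)
  | .mul n u v => F.alg.mul n (evalCWord F u) (evalCWord F v)

/-- `w` is the leading word `\bar f` of `f` with respect to the normal-word
basis `bas` and the weight ordering induced by `r`. -/
def IsLead (bas : Module.Basis (NormalWord B N) K C) (r : B → B → Prop)
    (f : C) (w : NormalWord B N) : Prop :=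
  bas.repr f w ≠ 0 ∧ ∀ w', bas.repr f w' ≠ 0 → w' = w ∨ wtLT r w' w

/-- A set of polynomials is monic if each has leading coefficient `1`. -/
def MonicSet (bas : Module.Basis (NormalWord B N) K C) (r : B → B → Prop) (S : Set C) : Prop :=
  ∀ s ∈ S, ∃ w, IsLead bas r s w ∧ bas.repr s w = 1

/-- Normal `S`-words together with their (formal) leading words:
either `[a_(n) s_(m) c]` with `a, \bar s` `D`-free, or `[a_(n) D^i s]`
with `a` `D`-free; the prefix `a_(n)` is encoded by the list `p`
(empty list = empty `a`). -/
inductive IsNSWord (F : FreeAssocConformal K B N C)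
    (bas : Module.Basis (NormalWord B N) K C) (r : B → B → Prop) (S : Set C) :
    C → NormalWord B N → Prop
  | first (p : List (B × Fin N)) (s : C) (hs : s ∈ S) (sw : NormalWord B N)
      (hlead : IsLead bas r s sw) (hfree : sw.exp = 0) (m : Fin N) (c : NormalWord B N) :
      IsNSWord F bas r S (evalAux F p (F.alg.mul (m : ℕ) s (evalWord F c)))
        ⟨p ++ sw.body ++ (sw.last, m) :: c.body, c.last, c.exp⟩
  | second (p : List (B × Fin N)) (s : C) (hs : s ∈ S) (sw : NormalWord B N)
      (hlead : IsLead bas r s sw) (i : ℕ) :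
      IsNSWord F bas r S (evalAux F p ((F.alg.D ^ i) s)) ⟨p ++ sw.body, sw.last, sw.exp + i⟩

/-- `h` can be written as a linear combination of normal `S`-words whose
(formal leading) words all satisfy `P`. -/
def SRep (F : FreeAssocConformal K B N C) (bas : Module.Basis (NormalWord B N) K C)
    (r : B → B → Prop) (S : Set C) (h : C) (P : NormalWord B N → Prop) : Prop :=
  ∃ (n : ℕ) (α : Fin n → K) (g : Fin n → C) (wd : Fin n → NormalWord B N),
    h = ∑ i, α i • g i ∧ ∀ i, IsNSWord F bas r S (g i) (wd i) ∧ P (wd i)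

/-- `h` is trivial modulo `S`: a linear combination of normal `S`-words with
leading words `≤ \bar h`. -/
def TrivialMod (F : FreeAssocConformal K B N C) (bas : Module.Basis (NormalWord B N) K C)
    (r : B → B → Prop) (S : Set C) (h : C) : Prop :=
  SRep F bas r S h (fun wd => ∀ hw, IsLead bas r h hw → wtLE r wd hw)

/-- `f` is not `D`-free: some monomial has positive `D`-exponent. -/
def NotDFree (bas : Module.Basis (NormalWord B N) K C) (f : C) : Prop :=
  ∃ w, bas.repr f w ≠ 0 ∧ w.exp ≠ 0

/-- All left multiplication compositions `b_(n) s`, `n ≥ N`, are trivial. -/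
def LeftMultClosed (F : FreeAssocConformal K B N C) (bas : Module.Basis (NormalWord B N) K C)
    (r : B → B → Prop) (S : Set C) : Prop :=
  ∀ s ∈ S, ∀ (b : B) (n : ℕ), N ≤ n → TrivialMod F bas r S (F.alg.mul n (F.ι b) s)

/-- All right multiplication compositions `s_(n) b` (for `\bar s` not `D`-free
and `n < N`, or `s` not `D`-free and `n ≥ N`) are trivial. -/
def RightMultClosed (F : FreeAssocConformal K B N C) (bas : Module.Basis (NormalWord B N) K C)
    (r : B → B → Prop) (S : Set C) : Prop :=
  ∀ s ∈ S, ∀ (b : B) (n : ℕ),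
    ((∃ sw, IsLead bas r s sw ∧ sw.exp ≠ 0) ∧ n < N) ∨ (NotDFree bas s ∧ N ≤ n) →
    TrivialMod F bas r S (F.alg.mul n s (F.ι b))

/-- `S` is a Gröbner–Shirshov basis in `C(B,N)`: `S` is monic and all
compositions (inclusion, right inclusion, intersection, right intersection,
left and right multiplication) are trivial modulo `S`. -/
def IsGSBasis (F : FreeAssocConformal K B N C) (bas : Module.Basis (NormalWord B N) K C)
    (r : B → B → Prop) (S : Set C) : Prop :=
  MonicSet bas r S ∧
  -- inclusion: \bar f = a_(n) \bar g_(m) c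
  (∀ f ∈ S, ∀ g ∈ S, ∀ fw gw : NormalWord B N,
    IsLead bas r f fw → IsLead bas r g gw → gw.exp = 0 →
    ∀ (p : List (B × Fin N)) (m : Fin N) (c : NormalWord B N),
      fw = ⟨p ++ sw₁ p gw m c, c.last, c.exp⟩ →
      TrivialMod F bas r S (f - evalAux F p (F.alg.mul (m : ℕ) g (evalWord F c)))) ∧
  -- right inclusion: \bar f = a_(n) \bar g D^i
  (∀ f ∈ S, ∀ g ∈ S, ∀ fw gw : NormalWord B N,
    IsLead bas r f fw → IsLead bas r g gw →
    ∀ (p : List (B × Fin N)) (i : ℕ),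
      fw = ⟨p ++ gw.body, gw.last, gw.exp + i⟩ →
      TrivialMod F bas r S (f - evalAux F p ((F.alg.D ^ i) g))) ∧
  -- intersection: w = \bar f_(m) c = a_(n) \bar g, |\bar f| + |\bar g| > |w|
  (∀ f ∈ S, ∀ g ∈ S, ∀ fw gw : NormalWord B N,
    IsLead bas r f fw → IsLead bas r g gw → fw.exp = 0 →
    ∀ (p : List (B × Fin N)) (m : Fin N) (c : NormalWord B N),
      fw.body ++ (fw.last, m) :: c.body = p ++ gw.body →
      c.last = gw.last → c.exp = gw.exp →
      p.length < fw.body.length + 1 →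
      TrivialMod F bas r S (F.alg.mul (m : ℕ) f (evalWord F c) - evalAux F p g)) ∧
  -- right intersection: w = \bar f D^i = a_(n) \bar g, i > 0
  (∀ f ∈ S, ∀ g ∈ S, ∀ fw gw : NormalWord B N,
    IsLead bas r f fw → IsLead bas r g gw →
    ∀ (p : List (B × Fin N)) (i : ℕ), 0 < i →
      fw.body = p ++ gw.body → fw.last = gw.last → fw.exp + i = gw.exp →
      TrivialMod F bas r S ((F.alg.D ^ i) f - evalAux F p g)) ∧
  LeftMultClosed F bas r S ∧ RightMultClosed F bas r S
where sw₁ (p : List (B × Fin N)) (gw : NormalWord B N) (m : Fin N) (c : NormalWord B N) :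
    List (B × Fin N) := gw.body ++ (gw.last, m) :: c.body

/-- The set of `S`-irreducible normal words. -/
def Irr (F : FreeAssocConformal K B N C) (bas : Module.Basis (NormalWord B N) K C)
    (r : B → B → Prop) (S : Set C) : Set (NormalWord B N) :=
  {w | ¬ ∃ g : C, IsNSWord F bas r S g w}

/-- Membership in the (conformal) ideal generated by `S`. -/
inductive InIdeal (F : FreeAssocConformal K B N C) (S : Set C) : C → Prop
  | mem {s : C} : s ∈ S → InIdeal F S s
  | zero : InIdeal F S 0
  | add {x y : C} : InIdeal F S x → InIdeal F S y → InIdeal F S (x + y)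
  | smul (a : K) {x : C} : InIdeal F S x → InIdeal F S (a • x)
  | deriv {x : C} : InIdeal F S x → InIdeal F S (F.alg.D x)
  | mul_left (n : ℕ) (y : C) {x : C} : InIdeal F S x → InIdeal F S (F.alg.mul n y x)
  | mul_right (n : ℕ) (y : C) {x : C} : InIdeal F S x → InIdeal F S (F.alg.mul n x y)

/-- The ideal generated by `S`, as a submodule. -/
def idealOf (F : FreeAssocConformal K B N C) (S : Set C) : Submodule K C where
  carrier := {x | InIdeal F S x}
  add_mem' := fun hx hy => InIdeal.add hx hy
  zero_mem' := InIdeal.zero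
  smul_mem' := fun a _ hx => InIdeal.smul a hx

/-- `S`-words: words containing exactly one occurrence of some `D^i s`, `s ∈ S`. -/
inductive IsSWord (F : FreeAssocConformal K B N C) (S : Set C) : C → Prop
  | base {s : C} (hs : s ∈ S) (i : ℕ) : IsSWord F S ((F.alg.D ^ i) s)
  | mul_right {u : C} (hu : IsSWord F S u) (v : CWord B) (m : ℕ) :
      IsSWord F S (F.alg.mul m u (evalCWord F v))
  | mul_left {u : C} (hu : IsSWord F S u) (v : CWord B) (m : ℕ) :
      IsSWord F S (F.alg.mul m (evalCWord F v) u)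

/-- A reduced set: every monomial of each `s ∈ S` is `(S∖{s})`-irreducible. -/
def IsReducedSet (F : FreeAssocConformal K B N C) (bas : Module.Basis (NormalWord B N) K C)
    (r : B → B → Prop) (S : Set C) : Prop :=
  ∀ s ∈ S, ∀ w, bas.repr s w ≠ 0 → w ∈ Irr F bas r (S \ {s})


/-! The conjugation `{y_(n) x} = Σ_k (-1)^(n+k) D^k (y_(n+k) x) / k!` is linear in the products and
is an involution: `{{x_(n) y}} = x_(n) y`, because the coefficients of the composite are those of
`e^{tD} e^{-tD} = 1`. Since `y_[m] x = y_(m) x - {x_(m) y}`, conjugating gives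
`{y_[n] x} = {y_(n) x} - x_(n) y = -x_[n] y`. -/

open Finset Filter
open scoped Nat

-- `(1 + (-1)) ^ s / s !` expanded by the binomial theorem.
theorem sum_range_neg_one_pow_mul_inv_factorial_mul_inv_factorial [CharZero K] (s : ℕ) :
    ∑ m ∈ range (s + 1), (-1 : K) ^ (s - m) * ((m ! : K)⁻¹ * ((s - m)! : K)⁻¹) = 0 ^ s := by
  calc ∑ m ∈ range (s + 1), (-1 : K) ^ (s - m) * ((m ! : K)⁻¹ * ((s - m)! : K)⁻¹)
      = (s ! : K)⁻¹ * ∑ m ∈ range (s + 1), (1 : K) ^ m * (-1) ^ (s - m) * s.choose m := by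
        rw [mul_sum]
        refine sum_congr rfl fun m hm => ?_
        have hs : (s ! : K) ≠ 0 := Nat.cast_ne_zero.2 s.factorial_ne_zero
        rw [Nat.cast_choose K (mem_range_succ_iff.1 hm), one_pow, one_mul]
        field_simp
    _ = (s ! : K)⁻¹ * 0 ^ s := by rw [← add_pow, add_neg_cancel]
    _ = 0 ^ s := by rcases s with _ | s <;> simp

theorem sum_range_sum_range_sub_neg_one_pow_smul [CharZero K] (g : ℕ → C) {L : ℕ} (hL : 0 < L) :
    ∑ m ∈ range L, ∑ k ∈ range (L - m),
      ((-1 : K) ^ k * ((m ! : K)⁻¹ * (k ! : K)⁻¹)) • g (m + k) = g 0 := by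
  rw [← sum_range_diag_flip]
  have hdiag : ∀ s, ∑ m ∈ range (s + 1),
      ((-1 : K) ^ (s - m) * ((m ! : K)⁻¹ * ((s - m)! : K)⁻¹)) • g (m + (s - m)) =
        (0 : K) ^ s • g s := by
    intro s
    rw [← sum_range_neg_one_pow_mul_inv_factorial_mul_inv_factorial, sum_smul]
    exact sum_congr rfl fun m hm => by rw [Nat.add_sub_cancel' (mem_range_succ_iff.1 hm)]
  rw [sum_congr rfl fun s _ => hdiag s,
    sum_eq_single_of_mem 0 (mem_range.2 hL) fun s _ hs => by rw [zero_pow hs, zero_smul],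
    pow_zero, one_smul]

theorem ConformalAlgebra.eventually_mul_eq_zero (A : ConformalAlgebra K C) (a b : C) :
    ∀ᶠ n in atTop, A.mul n a b = 0 :=
  eventually_atTop.2 (A.locality a b)

section conjOp

variable (D : C →ₗ[K] C) (f : ℕ → C → C → C)

theorem conjOp_eq_sum (n L : ℕ) (y x : C) (h : ∀ m, L ≤ m → f (n + m) y x = 0) :
    conjOp D f n y x =
      ∑ m ∈ range L, ((-1 : K) ^ (n + m) * (m ! : K)⁻¹) • (D ^ m) (f (n + m) y x) := by
  refine finsum_eq_sum_of_support_subset _ fun m hm => ?_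
  by_contra hmL
  rw [coe_range, Set.mem_Iio, not_lt] at hmL
  exact hm (by simp only [h m hmL, map_zero, smul_zero])

theorem conjOp_eventually_eq_zero (y x : C) (hf : ∀ᶠ m in atTop, f m y x = 0) :
    ∀ᶠ n in atTop, conjOp D f n y x = 0 := by
  obtain ⟨L, hL⟩ := eventually_atTop.1 hf
  filter_upwards [eventually_ge_atTop L] with n hn
  rw [conjOp_eq_sum D f n 0 y x fun m _ => hL _ (by omega), sum_range_zero]

theorem conjOp_sub (g : ℕ → C → C → C) (n : ℕ) (y x : C)
    (hf : ∀ᶠ m in atTop, f m y x = 0) (hg : ∀ᶠ m in atTop, g m y x = 0) :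
    conjOp D (fun m u v => f m u v - g m u v) n y x = conjOp D f n y x - conjOp D g n y x := by
  obtain ⟨L, hL⟩ := eventually_atTop.1 (hf.and hg)
  have hL' : ∀ m, L ≤ m → L ≤ n + m := fun m hm => hm.trans (Nat.le_add_left m n)
  rw [conjOp_eq_sum D _ n L y x fun m hm => by simp [(hL _ (hL' m hm)).1, (hL _ (hL' m hm)).2],
    conjOp_eq_sum D f n L y x fun m hm => (hL _ (hL' m hm)).1,
    conjOp_eq_sum D g n L y x fun m hm => (hL _ (hL' m hm)).2, ← sum_sub_distrib]
  simp only [map_sub, smul_sub]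

theorem conjOp_conjOp [CharZero K] (n : ℕ) (y x : C) (hf : ∀ᶠ m in atTop, f m x y = 0) :
    conjOp D (fun m u v => conjOp D f m v u) n y x = f n x y := by
  obtain ⟨L, hL⟩ := eventually_atTop.1 hf
  have hinner : ∀ m, conjOp D f (n + m) x y = ∑ k ∈ range (L + 1 - m),
      ((-1 : K) ^ (n + m + k) * (k ! : K)⁻¹) • (D ^ k) (f (n + m + k) x y) :=
    fun m => conjOp_eq_sum D f (n + m) (L + 1 - m) x y fun k hk => hL _ (by omega)
  rw [conjOp_eq_sum D _ n (L + 1) y x fun m hm => by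
      rw [hinner, Nat.sub_eq_zero_of_le hm, sum_range_zero]]
  refine Eq.trans ?_ ((sum_range_sum_range_sub_neg_one_pow_smul (K := K)
    (fun s => (D ^ s) (f (n + s) x y)) L.succ_pos).trans (by simp))
  refine sum_congr rfl fun m _ => ?_
  rw [hinner, map_sum, smul_sum]
  refine sum_congr rfl fun k _ => ?_
  have hsign : (-1 : K) ^ (n + m) * (-1) ^ (n + m + k) = (-1) ^ k := by
    rw [pow_add _ (n + m) k, ← mul_assoc, ← mul_pow, neg_one_mul, neg_neg, one_pow, one_mul]
  rw [map_smul, smul_smul, ← Module.End.mul_apply, ← pow_add, add_assoc]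
  congr 1
  linear_combination ((m ! : K)⁻¹ * (k ! : K)⁻¹) * hsign

end conjOp

theorem cBracket_anticomm {K : Type u} [Field K] [CharZero K]
    {C : Type w} [AddCommGroup C] [Module K C]
    (A : AssocConformalAlgebra K C) (n : ℕ) (x y : C) :
    cBracket A n x y = - conjOp A.D (fun m u v => cBracket A m u v) n y x := by
  have hxy := A.eventually_mul_eq_zero x y
  have hyx := A.eventually_mul_eq_zero y x
  set μ : ℕ → C → C → C := fun m u v => A.mul m u v
  have hconj : conjOp A.D (fun m u v => cBracket A m u v) n y x =
      conjOp A.D μ n y x - μ n x y := by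
    rw [← conjOp_conjOp A.D μ n y x hxy]
    exact conjOp_sub A.D μ (fun m u v => conjOp A.D μ m v u) n y x hyx
      (conjOp_eventually_eq_zero A.D μ x y hxy)
  rw [hconj, cBracket, neg_sub]
end

section
/- Any word on the alphabet D^ω(B) = { D^i b : b ∈ B, i ≥ 0 } in the free associative conformal algebra C(B, N) (formed by arbitrary bracketings and products (u)_{(n)}(v)) is equal in C(B, N) to a linear combination of normal words of the same length, i.e., right-normed bracketed words b₁_{(n₁)}(b₂_{(n₂)} ⋯ (b_k_{(n_k)} D^i b_{k+1})⋯) with all n_j < N. -/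
/-!  Basic definitions for (associative) conformal algebras, the free
associative conformal algebra `C(B,N)`, normal words, the weight ordering,
normal `S`-words, compositions and Gröbner–Shirshov bases, following
Ni–Chen, "A new Composition-Diamond lemma for associative conformal algebras". -/

universe u v w

open scoped BigOperators

variable {K : Type u} [Field K] {C : Type w} [AddCommGroup C] [Module K C]

variable {B : Type v} {N : ℕ}

/-! Let `V k` be the span of the normal words of length `k`. It is stable under `D` (Leibniz rule)
and `b_(m) V k ⊆ V (k + 1)` for every `b ∈ B` and every `m`: for `m ≥ N`, associativity expands
`0 = (b_(m) b₁)_(n) y` and expresses `b_(m) (b₁_(n) y)` through products `b_(m')` with `m' < m`,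
so induction on the length and on `m` applies. Associativity also rewrites `u_(m) x` for a normal
word `u` as a combination of right-normed products, hence `u_(m) V l ⊆ V (|u| + l)`, and
induction on the word finishes the proof. -/

namespace ConformalAlgebra

lemma mul_D_left (A : ConformalAlgebra K C) (n : ℕ) (a b : C) :
    A.mul n (A.D a) b = -((n : K) • A.mul (n - 1) a b) := by
  rcases Nat.eq_zero_or_pos n with rfl | hn
  · simp [A.D_mul_zero]
  · exact A.D_mul n a b hn

lemma exists_mul_D_pow_left_eq_smul (A : ConformalAlgebra K C) (n i : ℕ) (a b : C) :
    ∃ c : K, A.mul n ((A.D ^ i) a) b = c • A.mul (n - i) a b := by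
  induction i generalizing a with
  | zero => exact ⟨1, by simp⟩
  | succ i ih =>
    obtain ⟨c, hc⟩ := ih (A.D a)
    refine ⟨-(c * ((n - i : ℕ) : K)), ?_⟩
    rw [pow_succ, Module.End.mul_apply, hc, mul_D_left, Nat.sub_sub, smul_neg, smul_smul,
      neg_smul]

end ConformalAlgebra

section NormalSpan

variable (F : FreeAssocConformal K B N C)

lemma evalWord_cons (p : B × Fin N) (body : List (B × Fin N)) (last : B) (exp : ℕ) :
    evalWord F ⟨p :: body, last, exp⟩ = F.alg.mul p.2 (F.ι p.1) (evalWord F ⟨body, last, exp⟩) :=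
  rfl

def normalSpan (k : ℕ) : Submodule K C :=
  Submodule.span K {x | ∃ u : NormalWord B N, u.body.length + 1 = k ∧ evalWord F u = x}

variable {F}

lemma evalWord_mem_normalSpan (u : NormalWord B N) :
    evalWord F u ∈ normalSpan F (u.body.length + 1) :=
  Submodule.subset_span ⟨u, rfl, rfl⟩

lemma map_mem_normalSpan {k l : ℕ} (f : C →ₗ[K] C)
    (hf : ∀ u : NormalWord B N, u.body.length + 1 = k → f (evalWord F u) ∈ normalSpan F l)
    {x : C} (hx : x ∈ normalSpan F k) : f x ∈ normalSpan F l :=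
  (Submodule.map_span_le f _ _).mpr (by rintro _ ⟨u, hu, rfl⟩; exact hf u hu)
    (Submodule.mem_map_of_mem hx)

lemma mul_ι_mem_normalSpan_of_lt (b : B) {n : ℕ} (hn : n < N) {k : ℕ} {x : C}
    (hx : x ∈ normalSpan F k) : F.alg.mul n (F.ι b) x ∈ normalSpan F (k + 1) := by
  refine map_mem_normalSpan _ (fun u hu => ?_) hx
  subst hu
  exact evalWord_mem_normalSpan ⟨(b, ⟨n, hn⟩) :: u.body, u.last, u.exp⟩

lemma D_evalWord_mem_normalSpan (u : NormalWord B N) :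
    F.alg.D (evalWord F u) ∈ normalSpan F (u.body.length + 1) := by
  obtain ⟨body, last, exp⟩ := u
  induction body with
  | nil =>
    have h := evalWord_mem_normalSpan (F := F) ⟨[], last, exp + 1⟩
    rwa [evalWord, pow_succ', Module.End.mul_apply] at h
  | cons p rest ih =>
    have hp : (p.2 : ℕ) - 1 < N := (Nat.sub_le _ _).trans_lt p.2.isLt
    rw [evalWord_cons, F.alg.leibniz, ConformalAlgebra.mul_D_left]
    refine add_mem (neg_mem (Submodule.smul_mem _ _ ?_))
      (mul_ι_mem_normalSpan_of_lt p.1 p.2.isLt ih)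
    exact evalWord_mem_normalSpan ⟨(p.1, ⟨(p.2 : ℕ) - 1, hp⟩) :: rest, last, exp⟩

lemma D_mem_normalSpan {k : ℕ} {x : C} (hx : x ∈ normalSpan F k) :
    F.alg.D x ∈ normalSpan F k :=
  map_mem_normalSpan _ (fun u hu => hu ▸ D_evalWord_mem_normalSpan u) hx

lemma mul_ι_D_pow_ι_mem_normalSpan (b b' : B) (i m : ℕ) :
    F.alg.mul m (F.ι b) ((F.alg.D ^ i) (F.ι b')) ∈ normalSpan F 2 := by
  induction i generalizing m with
  | zero =>
    by_cases hm : m < N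
    · exact evalWord_mem_normalSpan ⟨[(b, ⟨m, hm⟩)], b', 0⟩
    · rw [pow_zero, Module.End.one_apply, F.loc b b' m (not_lt.mp hm)]
      exact zero_mem _
  | succ i ih =>
    have hstep : F.alg.mul m (F.ι b) ((F.alg.D ^ (i + 1)) (F.ι b')) =
        F.alg.D (F.alg.mul m (F.ι b) ((F.alg.D ^ i) (F.ι b'))) +
          (m : K) • F.alg.mul (m - 1) (F.ι b) ((F.alg.D ^ i) (F.ι b')) := by
      rw [pow_succ', Module.End.mul_apply, F.alg.leibniz, ConformalAlgebra.mul_D_left]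
      abel
    rw [hstep]
    exact add_mem (D_mem_normalSpan (ih m)) (Submodule.smul_mem _ _ (ih (m - 1)))

/-- Associativity applied to `(b_(m) b₁)_(n) y = 0`. -/
lemma mul_ι_mul_ι_eq_sum_of_le (b b₁ : B) {m : ℕ} (hm : N ≤ m) (n : ℕ) (y : C) :
    F.alg.mul m (F.ι b) (F.alg.mul n (F.ι b₁) y) =
      -∑ t ∈ Finset.range m, ((-1 : K) ^ (t + 1) * (m.choose (t + 1) : K)) •
        F.alg.mul (m - (t + 1)) (F.ι b) (F.alg.mul (n + (t + 1)) (F.ι b₁) y) := by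
  have hassoc := F.alg.assoc m n (F.ι b) (F.ι b₁) y
  rw [F.loc b b₁ m hm, map_zero, LinearMap.zero_apply, Finset.sum_range_succ'] at hassoc
  simp only [pow_zero, Nat.choose_zero_right, Nat.cast_one, one_mul, one_smul, Nat.sub_zero,
    Nat.add_zero] at hassoc
  exact eq_neg_of_add_eq_zero_right hassoc.symm

lemma mul_ι_evalWord_mem_normalSpan (L : ℕ) :
    ∀ (b : B) (m : ℕ) (u : NormalWord B N), u.body.length = L →
      F.alg.mul m (F.ι b) (evalWord F u) ∈ normalSpan F (L + 2) := by
  induction L with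
  | zero =>
    rintro b m ⟨body, last, exp⟩ hL
    obtain rfl : body = [] := List.length_eq_zero_iff.mp hL
    exact mul_ι_D_pow_ι_mem_normalSpan b last exp m
  | succ L ihL =>
    intro b m
    induction m using Nat.strong_induction_on with
    | _ m ihm =>
    rintro ⟨_ | ⟨p, rest⟩, last, exp⟩ hL
    · exact absurd hL (by simp)
    by_cases hm : m < N
    · exact hL ▸ evalWord_mem_normalSpan ⟨(b, ⟨m, hm⟩) :: p :: rest, last, exp⟩
    rw [evalWord_cons, mul_ι_mul_ι_eq_sum_of_le b p.1 (not_lt.mp hm)]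
    refine neg_mem (Submodule.sum_mem _ fun t ht => Submodule.smul_mem _ _ ?_)
    have hinner := ihL p.1 (p.2 + (t + 1)) ⟨rest, last, exp⟩ (Nat.succ.inj hL)
    exact map_mem_normalSpan _ (fun u hu => ihm _ (by simp at ht; omega) u (by omega)) hinner

lemma mul_ι_mem_normalSpan (b : B) (m : ℕ) {k : ℕ} {x : C} (hx : x ∈ normalSpan F k) :
    F.alg.mul m (F.ι b) x ∈ normalSpan F (k + 1) :=
  map_mem_normalSpan _ (fun u hu => hu ▸ mul_ι_evalWord_mem_normalSpan _ b m u rfl) hx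

lemma mul_evalWord_mem_normalSpan (u : NormalWord B N) (m : ℕ) {l : ℕ} {x : C}
    (hx : x ∈ normalSpan F l) :
    F.alg.mul m (evalWord F u) x ∈ normalSpan F (u.body.length + 1 + l) := by
  obtain ⟨body, last, exp⟩ := u
  induction body generalizing m with
  | nil =>
    obtain ⟨c, hc⟩ := F.alg.exists_mul_D_pow_left_eq_smul m exp (F.ι last) x
    show F.alg.mul m ((F.alg.D ^ exp) (F.ι last)) x ∈ normalSpan F (0 + 1 + l)
    rw [hc, zero_add, add_comm]
    exact Submodule.smul_mem _ _ (mul_ι_mem_normalSpan last _ hx)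
  | cons p rest ih =>
    rw [evalWord_cons, F.alg.assoc]
    refine Submodule.sum_mem _ fun t _ => Submodule.smul_mem _ _ ?_
    have hp : (p.2 : ℕ) - t < N := (Nat.sub_le _ _).trans_lt p.2.isLt
    have h := mul_ι_mem_normalSpan_of_lt p.1 hp (ih (m + t))
    rwa [add_right_comm] at h

lemma evalCWord_mem_normalSpan (w : CWord B) : evalCWord F w ∈ normalSpan F w.length := by
  induction w with
  | gen b i => exact evalWord_mem_normalSpan ⟨[], b, i⟩
  | mul n u v ihu ihv =>
    refine map_mem_normalSpan ((F.alg.mul n).flip (evalCWord F v)) (fun u' hu' => ?_) ihu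
    show F.alg.mul n (evalWord F u') (evalCWord F v) ∈ normalSpan F (u.length + v.length)
    exact hu' ▸ mul_evalWord_mem_normalSpan u' n ihv

end NormalSpan

theorem word_eq_lin_comb_normal_words_general {K : Type u} [Field K]
    {B : Type v} {N : ℕ} {C : Type w} [AddCommGroup C] [Module K C]
    (F : FreeAssocConformal K B N C) (w : CWord B) :
    ∃ (n : ℕ) (α : Fin n → K) (u : Fin n → NormalWord B N),
      evalCWord F w = ∑ i, α i • evalWord F (u i) ∧
      ∀ i, (u i).body.length + 1 = w.length := by
  obtain ⟨n, α, x, hsum⟩ := Submodule.mem_span_set'.mp (evalCWord_mem_normalSpan (F := F) w)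
  choose u hu hx using fun i => (x i).2
  exact ⟨n, α, u, by simp only [← hsum, hx], hu⟩

theorem word_eq_lin_comb_normal_words {K : Type u} [Field K] [CharZero K]
    {B : Type v} {N : ℕ} {C : Type w} [AddCommGroup C] [Module K C]
    (F : FreeAssocConformal K B N C) (w : CWord B) :
    ∃ (n : ℕ) (α : Fin n → K) (u : Fin n → NormalWord B N),
      evalCWord F w = ∑ i, α i • evalWord F (u i) ∧
      ∀ i, (u i).body.length + 1 = w.length :=
  word_eq_lin_comb_normal_words_general F w
end

section
/- In the free associative conformal algebra C(B, N) with the lexicographic weight ordering on associative normal words, if a ∈ T is D-free (i.e., its D-exponent is 0), 0 ≤ n < N, and u ∈ T, then the leading word of [a]_{(n)}[u] is a_{(n)} u; moreover, if u > v in T then the leading word of [a]_{(n)}[u] is strictly greater than that of [a]_{(n)}[v]. -/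
/-!  Basic definitions for (associative) conformal algebras, the free
associative conformal algebra `C(B,N)`, normal words, the weight ordering,
normal `S`-words, compositions and Gröbner–Shirshov bases, following
Ni–Chen, "A new Composition-Diamond lemma for associative conformal algebras". -/

universe u v w

open scoped BigOperators

variable {K : Type u} [Field K] {C : Type w} [AddCommGroup C] [Module K C]

variable {B : Type v} {N : ℕ}

/-! Rescaling every generator by `2` extends, by the universal property, to an endomorphism of
`C(B, N)` acting on a normal word with `ℓ` letters by `2 ^ ℓ`; in characteristic zero this makes
`C(B, N)` graded by length, so `[a]_(m)[u]` is a combination of words with `|a| + |u|` letters.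
Writing `a = b_(k) a'`, associativity gives
`[a]_(m)[u] = b_(k) ([a']_(m)[u]) + Σ_{t ≥ 1} ± (k choose t) b_(k-t) ([a']_(m+t)[u])`.
By induction the first term is `[a_(m) u]` plus words below it, while every word of the sum has
the same length as `a_(m) u` and begins with `b_(k-t) < b_(k)`. -/

namespace NormalWord

variable {B : Type v} {N : ℕ}

def cons (x : B × Fin N) (w : NormalWord B N) : NormalWord B N := ⟨x :: w.body, w.last, w.exp⟩

theorem length_body_concat (a : NormalWord B N) (n : Fin N) (u : NormalWord B N) :
    (a.concat n u).body.length = a.body.length + u.body.length + 1 := by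
  simp only [concat, List.length_append, List.length_cons]
  omega

end NormalWord

section WeightOrder

variable {B : Type v} {N : ℕ} {r : B → B → Prop}

theorem wtLT_irrefl [Std.Irrefl r] (w : NormalWord B N) : ¬ wtLT r w w := by
  rintro (h | ⟨-, h | ⟨-, h | ⟨-, h⟩⟩⟩)
  · exact lt_irrefl _ h
  · exact List.lex_irrefl (irrefl_of _) _ h
  · exact irrefl_of r _ h
  · exact lt_irrefl _ h

theorem wtLT_cons (x : B × Fin N) {v w : NormalWord B N} (h : wtLT r v w) :
    wtLT r (v.cons x) (w.cons x) := by
  rcases h with h | ⟨hlen, h | ⟨hbody, h⟩⟩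
  · exact Or.inl (Nat.succ_lt_succ h)
  · exact Or.inr ⟨congrArg Nat.succ hlen, Or.inl (List.Lex.cons h)⟩
  · exact Or.inr ⟨congrArg Nat.succ hlen, Or.inr ⟨congrArg (x :: ·) hbody, h⟩⟩

theorem wtLT_cons_of_lt (b : B) {j k : Fin N} (hjk : j < k) {v w : NormalWord B N}
    (hlen : v.body.length = w.body.length) : wtLT r (v.cons (b, j)) (w.cons (b, k)) :=
  Or.inr ⟨congrArg Nat.succ hlen, Or.inl (List.Lex.rel (Prod.Lex.right b hjk))⟩

theorem wtLT_concat (a : NormalWord B N) (n : Fin N) {v w : NormalWord B N} (h : wtLT r v w) :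
    wtLT r (a.concat n v) (a.concat n w) := by
  obtain ⟨l, c, e⟩ := a
  induction l with
  | nil => exact wtLT_cons (c, n) h
  | cons x l ih => exact wtLT_cons x ih

end WeightOrder

theorem Module.Basis.repr_apply_of_apply_eq_smul {ι R M : Type*} [CommSemiring R]
    [AddCommMonoid M] [Module R M] (b : Module.Basis ι R M) {f : M →ₗ[R] M} {μ : ι → R}
    (hf : ∀ i, f (b i) = μ i • b i) (x : M) (i : ι) : b.repr (f x) i = μ i * b.repr x i := by
  have key : Finsupp.lapply i ∘ₗ b.repr.toLinearMap ∘ₗ f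
      = μ i • (Finsupp.lapply i ∘ₗ b.repr.toLinearMap) := b.ext fun j => by
    by_cases h : j = i
    · subst h; simp [hf]
    · simp [hf, h]
  exact LinearMap.congr_fun key x

namespace FreeAssocConformal

variable {B : Type v} {N : ℕ} (F : FreeAssocConformal K B N C)

theorem exists_rescale (c : K) : ∃ φ : C →ₗ[K] C, (∀ b, φ (F.ι b) = c • F.ι b) ∧
    (∀ (n : ℕ) (x y : C), φ (F.alg.mul n x y) = F.alg.mul n (φ x) (φ y)) ∧
    ∀ x, φ (F.alg.D x) = F.alg.D (φ x) :=
  (F.universal C F.alg (fun b => c • F.ι b) fun b b' n hn => by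
    simp [F.loc b b' n hn]).exists

noncomputable def rescale (c : K) : C →ₗ[K] C := (F.exists_rescale c).choose

theorem rescale_ι (c : K) (b : B) : F.rescale c (F.ι b) = c • F.ι b :=
  (F.exists_rescale c).choose_spec.1 b

theorem rescale_mul (c : K) (n : ℕ) (x y : C) :
    F.rescale c (F.alg.mul n x y) = F.alg.mul n (F.rescale c x) (F.rescale c y) :=
  (F.exists_rescale c).choose_spec.2.1 n x y

theorem rescale_D_pow (c : K) (i : ℕ) (x : C) :
    F.rescale c ((F.alg.D ^ i) x) = (F.alg.D ^ i) (F.rescale c x) := by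
  have hD : F.alg.D ∘ₗ F.rescale c = F.rescale c ∘ₗ F.alg.D :=
    LinearMap.ext fun x => ((F.exists_rescale c).choose_spec.2.2 x).symm
  exact (LinearMap.congr_fun (Module.End.commute_pow_left_of_commute hD i) x).symm

theorem rescale_evalWord (c : K) (w : NormalWord B N) :
    F.rescale c (evalWord F w) = c ^ (w.body.length + 1) • evalWord F w := by
  obtain ⟨l, b, e⟩ := w
  induction l with
  | nil => simp [evalWord, evalAux, rescale_D_pow, rescale_ι]
  | cons x l ih =>
    change F.rescale c (F.alg.mul x.2 (F.ι x.1) (evalWord F ⟨l, b, e⟩)) = _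
    rw [rescale_mul, rescale_ι, ih, map_smul, LinearMap.map_smul₂, smul_smul, ← pow_succ]
    rfl

end FreeAssocConformal

section LeadingWord

variable {B : Type v} {N : ℕ} (F : FreeAssocConformal K B N C)
  (bas : Module.Basis (NormalWord B N) K C) (hbas : ∀ w, bas w = evalWord F w)

include hbas in
theorem mem_span_length_eq_of_rescale_eq [CharZero K] {x : C} {d : ℕ}
    (hx : F.rescale 2 x = (2 : K) ^ (d + 1) • x) :
    x ∈ Submodule.span K (bas '' {w | w.body.length = d}) := by
  rw [Module.Basis.mem_span_image]
  intro w hw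
  have hdiag := bas.repr_apply_of_apply_eq_smul (f := F.rescale 2)
    (fun w => by rw [hbas, F.rescale_evalWord]) x w
  rw [hx, map_smul, Finsupp.smul_apply, smul_eq_mul] at hdiag
  have hpow : (2 : K) ^ (w.body.length + 1) = 2 ^ (d + 1) :=
    (mul_right_cancel₀ (Finsupp.mem_support_iff.mp hw) hdiag).symm
  exact Nat.succ_injective (Nat.pow_right_injective le_rfl (by exact_mod_cast hpow))

include hbas in
theorem mul_evalWord_mem_span_length_eq [CharZero K] (m : ℕ) (a u : NormalWord B N) :
    F.alg.mul m (evalWord F a) (evalWord F u)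
      ∈ Submodule.span K (bas '' {w | w.body.length = a.body.length + u.body.length + 1}) := by
  refine mem_span_length_eq_of_rescale_eq F bas hbas ?_
  rw [F.rescale_mul, F.rescale_evalWord, F.rescale_evalWord, map_smul, LinearMap.map_smul₂,
    smul_smul, ← pow_add]
  ring_nf

include hbas in
theorem mul_ι_mem_span_image_cons (x : B × Fin N) {S : Set (NormalWord B N)} {y : C}
    (hy : y ∈ Submodule.span K (bas '' S)) :
    F.alg.mul x.2 (F.ι x.1) y ∈ Submodule.span K (bas '' (NormalWord.cons x '' S)) := by
  have hcons : ∀ w, F.alg.mul x.2 (F.ι x.1) (bas w) = bas (w.cons x) := fun w => by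
    rw [hbas, hbas]; rfl
  rw [Set.image_image, ← funext hcons, ← Set.image_image (F.alg.mul x.2 (F.ι x.1)),
    ← Submodule.map_span]
  exact Submodule.mem_map_of_mem hy

def spanBelow (r : B → B → Prop) (W : NormalWord B N) : Submodule K C :=
  Submodule.span K (bas '' {w | wtLT r w W})

variable {r : B → B → Prop}

theorem isLead_of_sub_mem_spanBelow [Std.Irrefl r] {x : C} {W : NormalWord B N}
    (h : x - bas W ∈ spanBelow bas r W) : IsLead bas r x W := by
  rw [spanBelow, Module.Basis.mem_span_image] at h
  have hx : bas.repr x = Finsupp.single W 1 + bas.repr (x - bas W) := by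
    rw [← bas.repr_self, ← map_add, add_sub_cancel]
  have hW : bas.repr (x - bas W) W = 0 :=
    Finsupp.notMem_support_iff.mp fun hW => wtLT_irrefl W (h hW)
  refine ⟨by rw [hx, Finsupp.add_apply, hW, Finsupp.single_eq_same, add_zero]; exact one_ne_zero,
    fun w hw => ?_⟩
  by_cases hw' : w = W
  · exact Or.inl hw'
  · rw [hx, Finsupp.add_apply, Finsupp.single_eq_of_ne hw', zero_add] at hw
    exact Or.inr (h (Finsupp.mem_support_iff.mpr hw))

include hbas in
theorem mul_ι_mem_spanBelow_cons (p : B × Fin N) {y : C} {W : NormalWord B N}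
    (hy : y ∈ spanBelow bas r W) : F.alg.mul p.2 (F.ι p.1) y ∈ spanBelow bas r (W.cons p) := by
  refine Submodule.span_mono (Set.image_mono ?_) (mul_ι_mem_span_image_cons F bas hbas p hy)
  rintro _ ⟨w, hw, rfl⟩
  exact wtLT_cons p hw

include hbas in
theorem mul_mul_ι_sub_mem_spanBelow (p : B × Fin N) {x y : C} {W : NormalWord B N}
    (hxy : ∀ t, F.alg.mul t x y ∈ Submodule.span K (bas '' {w | w.body.length = W.body.length}))
    (m : ℕ) :
    F.alg.mul m (F.alg.mul p.2 (F.ι p.1) x) y - F.alg.mul p.2 (F.ι p.1) (F.alg.mul m x y)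
      ∈ spanBelow bas r (W.cons p) := by
  rw [F.alg.assoc, Finset.sum_range_succ', pow_zero, Nat.choose_zero_right, Nat.cast_one,
    mul_one, one_smul, Nat.sub_zero, add_zero, add_sub_cancel_right]
  refine Submodule.sum_mem _ fun t ht => Submodule.smul_mem _ _ ?_
  have hj : (p.2 : ℕ) - (t + 1) < p.2 := by have := Finset.mem_range.mp ht; omega
  refine Submodule.span_mono (Set.image_mono ?_)
    (mul_ι_mem_span_image_cons F bas hbas (p.1, ⟨p.2 - (t + 1), by omega⟩) (hxy (m + (t + 1))))
  rintro _ ⟨w, hw, rfl⟩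
  exact wtLT_cons_of_lt p.1 (show (⟨p.2 - (t + 1), _⟩ : Fin N) < p.2 from hj) hw

include hbas in
theorem mul_evalWord_sub_concat_mem_spanBelow [CharZero K] (a : NormalWord B N)
    (ha : a.exp = 0) (m : Fin N) (u : NormalWord B N) :
    F.alg.mul m (evalWord F a) (evalWord F u) - bas (a.concat m u)
      ∈ spanBelow bas r (a.concat m u) := by
  obtain ⟨l, c, e⟩ := a
  obtain rfl : e = 0 := ha
  induction l with
  | nil =>
    rw [hbas, sub_eq_zero_of_eq]
    · exact zero_mem _
    · simp [evalWord, evalAux, NormalWord.concat]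
  | cons x l ih =>
    set a' : NormalWord B N := ⟨l, c, 0⟩
    change F.alg.mul m (F.alg.mul x.2 (F.ι x.1) (evalWord F a')) (evalWord F u)
        - bas ((a'.concat m u).cons x) ∈ spanBelow bas r ((a'.concat m u).cons x)
    have hsplit : F.alg.mul m (F.alg.mul x.2 (F.ι x.1) (evalWord F a')) (evalWord F u)
          - bas ((a'.concat m u).cons x)
        = (F.alg.mul m (F.alg.mul x.2 (F.ι x.1) (evalWord F a')) (evalWord F u)
            - F.alg.mul x.2 (F.ι x.1) (F.alg.mul m (evalWord F a') (evalWord F u)))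
          + F.alg.mul x.2 (F.ι x.1)
            (F.alg.mul m (evalWord F a') (evalWord F u) - bas (a'.concat m u)) := by
      rw [map_sub, hbas, hbas]
      change _ = _ + (_ - F.alg.mul x.2 (F.ι x.1) (evalWord F (a'.concat m u)))
      abel
    rw [hsplit]
    refine add_mem (mul_mul_ι_sub_mem_spanBelow F bas hbas x (fun t => ?_) m)
      (mul_ι_mem_spanBelow_cons F bas hbas x ih)
    rw [NormalWord.length_body_concat]
    exact mul_evalWord_mem_span_length_eq F bas hbas t a' u

end LeadingWord

theorem lead_mul_Dfree_left {K : Type u} [Field K] [CharZero K]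
    {B : Type v} {N : ℕ} {C : Type w} [AddCommGroup C] [Module K C]
    (F : FreeAssocConformal K B N C) (bas : Module.Basis (NormalWord B N) K C)
    (hbas : ∀ w, bas w = evalWord F w)
    (r : B → B → Prop) (hr : IsWellOrder B r)
    (a u v : NormalWord B N) (ha : a.exp = 0) (n : Fin N) :
    IsLead bas r (F.alg.mul (n : ℕ) (evalWord F a) (evalWord F u)) (a.concat n u) ∧
    (wtLT r v u → wtLT r (a.concat n v) (a.concat n u)) := by
  have := hr
  exact ⟨isLead_of_sub_mem_spanBelow bas
    (mul_evalWord_sub_concat_mem_spanBelow F bas hbas a ha n u), wtLT_concat a n⟩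
end

section
/- The lexicographic weight ordering on normal words of the free associative conformal algebra is not compatible with the multiplications: in C({a}, N = 1), one has a_{(0)} Da > a_{(0)} a, yet (a_{(0)} Da)_{(0)} a = 0 while (a_{(0)} a)_{(0)} a = a_{(0)}(a_{(0)} a) ≠ 0. -/
/-!  Basic definitions for (associative) conformal algebras, the free
associative conformal algebra `C(B,N)`, normal words, the weight ordering,
normal `S`-words, compositions and Gröbner–Shirshov bases, following
Ni–Chen, "A new Composition-Diamond lemma for associative conformal algebras". -/

universe u v w

open scoped BigOperators

variable {K : Type u} [Field K] {C : Type w} [AddCommGroup C] [Module K C]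

variable {B : Type v} {N : ℕ}

/-! In degree `0` the associativity identity has a single term, `(x_(0) y)_(0) z = x_(0) (y_(0) z)`.
Taking `y = D a` gives `0` because `(D a)_(0) = 0`, while for `y = a` the right-hand side
`a_(0) (a_(0) a)` is the normal word `a_(0) a_(0) a`, a basis vector of `C({a}, 1)`. -/

theorem wtLT_of_exp_lt (r : B → B → Prop) {u v : NormalWord B N}
    (hbody : u.body = v.body) (hlast : u.last = v.last) (hexp : u.exp < v.exp) :
    wtLT r u v :=
  Or.inr ⟨congrArg List.length hbody, Or.inr ⟨hbody, Or.inr ⟨hlast, hexp⟩⟩⟩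

namespace AssocConformalAlgebra

theorem mul_zero_mul_zero (A : AssocConformalAlgebra K C) (x y z : C) :
    A.mul 0 (A.mul 0 x y) z = A.mul 0 x (A.mul 0 y z) := by
  simpa using A.assoc 0 0 x y z

theorem mul_zero_mul_zero_D (A : AssocConformalAlgebra K C) (x y z : C) :
    A.mul 0 (A.mul 0 x (A.D y)) z = 0 := by
  rw [mul_zero_mul_zero, A.D_mul_zero, map_zero]

end AssocConformalAlgebra

theorem evalWord_ne_zero (F : FreeAssocConformal K B N C)
    {bas : Module.Basis (NormalWord B N) K C} (hbas : ∀ w, bas w = evalWord F w)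
    (w : NormalWord B N) : evalWord F w ≠ 0 :=
  hbas w ▸ bas.ne_zero w

theorem ordering_not_compatible_general {K : Type u} [Field K]
    {C : Type w} [AddCommGroup C] [Module K C]
    (F : FreeAssocConformal K Unit 1 C) (bas : Module.Basis (NormalWord Unit 1) K C)
    (hbas : ∀ w, bas w = evalWord F w) :
    wtLT (fun _ _ : Unit => False)
      (⟨[((), 0)], (), 0⟩ : NormalWord Unit 1) (⟨[((), 0)], (), 1⟩ : NormalWord Unit 1) ∧
    F.alg.mul 0 (F.alg.mul 0 (F.ι ()) (F.alg.D (F.ι ()))) (F.ι ()) = 0 ∧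
    F.alg.mul 0 (F.alg.mul 0 (F.ι ()) (F.ι ())) (F.ι ())
      = F.alg.mul 0 (F.ι ()) (F.alg.mul 0 (F.ι ()) (F.ι ())) ∧
    F.alg.mul 0 (F.ι ()) (F.alg.mul 0 (F.ι ()) (F.ι ())) ≠ 0 :=
  ⟨wtLT_of_exp_lt _ rfl rfl Nat.zero_lt_one,
    F.alg.mul_zero_mul_zero_D _ _ _,
    F.alg.mul_zero_mul_zero _ _ _,
    evalWord_ne_zero F hbas ⟨[((), 0), ((), 0)], (), 0⟩⟩

theorem ordering_not_compatible {K : Type u} [Field K] [CharZero K]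
    {C : Type w} [AddCommGroup C] [Module K C]
    (F : FreeAssocConformal K Unit 1 C) (bas : Module.Basis (NormalWord Unit 1) K C)
    (hbas : ∀ w, bas w = evalWord F w) :
    wtLT (fun _ _ : Unit => False)
      (⟨[((), 0)], (), 0⟩ : NormalWord Unit 1) (⟨[((), 0)], (), 1⟩ : NormalWord Unit 1) ∧
    F.alg.mul 0 (F.alg.mul 0 (F.ι ()) (F.alg.D (F.ι ()))) (F.ι ()) = 0 ∧
    F.alg.mul 0 (F.alg.mul 0 (F.ι ()) (F.ι ())) (F.ι ())
      = F.alg.mul 0 (F.ι ()) (F.alg.mul 0 (F.ι ()) (F.ι ())) ∧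
    F.alg.mul 0 (F.ι ()) (F.alg.mul 0 (F.ι ()) (F.ι ())) ≠ 0 :=
  ordering_not_compatible_general F bas hbas
end
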